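/- If f: P_n^+ → ℝ is nonnegative-valued and measurable on the cone of positive definite matrices, and the Laplace transform Lf(Z) = ∫_{P_n^+} e^{-⟨Z,S⟩} f(S) dS exists for Z = Σ(μ_i + μ_j) for all pairs from a family μ_1,…,μ_k of probability measures, then for any c_1,…,c_k ∈ ℝ, Σ_{i,j} c_i c_j Lf(Σ(μ_i + μ_j)) ≥ 0; i.e. μ ↦ Lf(Σ(μ)) is a positive definite semigroup function. -/

import Mathlib

open Finset Matrix MeasureTheory

noncomputable instance {n : ℕ} : MeasureSpace (Matrix (Fin n) (Fin n) ℝ) :=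
  inferInstanceAs (MeasureSpace (Fin n → Fin n → ℝ))

noncomputable def meanVec {n : ℕ} (μ : (Fin n → ℝ) →₀ ℝ) : Fin n → ℝ :=
  fun i => ∑ p ∈ μ.support, μ p * p i

noncomputable def varMat {n : ℕ} (μ : (Fin n → ℝ) →₀ ℝ) : Matrix (Fin n) (Fin n) ℝ :=
  Matrix.of fun i j =>
    (∑ p ∈ μ.support, μ p * p i * p j) - meanVec μ i * meanVec μ j

/-- Laplace transform of a function on the cone of positive definite matrices. -/
noncomputable def laplaceT {n : ℕ} (f : Matrix (Fin n) (Fin n) ℝ → ℝ)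
    (Z : Matrix (Fin n) (Fin n) ℝ) : ℝ :=
  ∫ S in {S : Matrix (Fin n) (Fin n) ℝ | S.PosDef}, Real.exp (-(Z * S).trace) * f S

/-!
Since `Σ(μ + ν) = Σ(μ) + Σ(ν) - (m_μ m_νᵀ + m_ν m_μᵀ)`, for fixed `S ∈ P_n^+` the kernel
`exp (-⟨Σ(μᵢ + μⱼ), S⟩)` equals `dᵢ dⱼ exp (2 mᵢᵀ S mⱼ)` with `dᵢ = exp (-⟨Σ(μᵢ), S⟩)`.
The matrix `(2 mᵢᵀ S mⱼ)` is a Gram matrix; its entrywise exponential is the limit of sums of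
Hadamard powers, hence positive semidefinite by the Schur product theorem, and so is its
congruence by `diag d`. Integrating the nonnegative quadratic form against `f ≥ 0` over the
(measurable) cone gives the claim.
-/

namespace Matrix

variable {ι : Type*}

theorem isClosed_setOf_posSemidef {R : Type*} [Ring R] [PartialOrder R] [StarRing R]
    [TopologicalSpace R] [IsTopologicalRing R] [ContinuousStar R] [OrderClosedTopology R] :
    IsClosed {M : Matrix ι ι R | M.PosSemidef} := by
  simp only [PosSemidef, IsHermitian, Set.ofPred_and, Set.ofPred_forall]
  refine (isClosed_eq continuous_id.matrix_conjTranspose continuous_id).inter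
    (isClosed_iInter fun x => isClosed_le continuous_const ?_)
  exact continuous_finsetSum _ fun i _ => continuous_finsetSum _ fun j _ =>
    (continuous_const.mul (continuous_id.matrix_elem i j)).mul continuous_const

open scoped ComplexOrder in
theorem measurableSet_setOf_posDef {𝕜 : Type*} [Fintype ι] [DecidableEq ι] [RCLike 𝕜]
    [MeasurableSpace (Matrix ι ι 𝕜)] [OpensMeasurableSpace (Matrix ι ι 𝕜)] :
    MeasurableSet {S : Matrix ι ι 𝕜 | S.PosDef} := by
  have hdet : {S : Matrix ι ι 𝕜 | S.PosDef} = {S | S.PosSemidef} ∩ {S | S.det ≠ 0} :=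
    Set.ext fun S =>
      ⟨fun h => ⟨h.posSemidef, h.det_pos.ne'⟩, fun ⟨h, h₀⟩ => h.posDef_iff_det_ne_zero.2 h₀⟩
  rw [hdet]
  exact isClosed_setOf_posSemidef.measurableSet.inter
    (isOpen_ne_fun continuous_id.matrix_det continuous_const).measurableSet

theorem trace_vecMulVec_mul {R : Type*} [Fintype ι] [CommSemiring R] (x y : ι → R)
    (S : Matrix ι ι R) : (vecMulVec x y * S).trace = y ⬝ᵥ S *ᵥ x := by
  simp only [trace, diag, mul_apply, vecMulVec_apply, dotProduct, mulVec, Finset.mul_sum]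
  rw [Finset.sum_comm]
  exact Finset.sum_congr rfl fun _ _ => Finset.sum_congr rfl fun _ _ => by ring

theorem IsSymm.dotProduct_mulVec_comm {R : Type*} [Fintype ι] [CommSemiring R]
    {S : Matrix ι ι R} (hS : S.IsSymm) (x y : ι → R) : x ⬝ᵥ S *ᵥ y = y ⬝ᵥ S *ᵥ x := by
  rw [dotProduct_mulVec, dotProduct_comm, ← mulVec_transpose, hS.eq]

variable [Fintype ι]

theorem PosSemidef.sum_mul_mul_nonneg {K : Matrix ι ι ℝ} (hK : K.PosSemidef) (c : ι → ℝ) :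
    0 ≤ ∑ i, ∑ j, c i * c j * K i j := by
  simpa [dotProduct, mulVec, Finset.mul_sum, mul_comm, mul_left_comm] using
    hK.dotProduct_mulVec_nonneg c

open scoped ComplexOrder in
theorem PosSemidef.map_pow {𝕜 : Type*} [RCLike 𝕜] {K : Matrix ι ι 𝕜} (hK : K.PosSemidef)
    (m : ℕ) : (K.map (· ^ m)).PosSemidef := by
  induction m with
  | zero =>
    convert posSemidef_vecMulVec_self_star (1 : ι → 𝕜) using 1
    ext
    simp [vecMulVec]
  | succ m ih =>
    rw [show K.map (· ^ (m + 1)) = K.map (· ^ m) ⊙ K by ext; simp [pow_succ]]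
    exact ih.hadamard hK

theorem PosSemidef.map_exp {K : Matrix ι ι ℝ} (hK : K.PosSemidef) :
    (K.map Real.exp).PosSemidef := by
  have hsum : HasSum (fun m : ℕ => (m.factorial : ℝ)⁻¹ • K.map (· ^ m)) (K.map Real.exp) := by
    refine Pi.hasSum.2 fun i => Pi.hasSum.2 fun j => ?_
    simpa [Real.exp_eq_exp_ℝ, div_eq_inv_mul] using NormedSpace.expSeries_div_hasSum_exp (K i j)
  refine isClosed_setOf_posSemidef.mem_of_tendsto hsum.tendsto_sum_nat
    (Filter.Eventually.of_forall fun N => posSemidef_sum _ fun m _ => ?_)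
  exact (hK.map_pow m).smul (by positivity)

end Matrix

theorem Finsupp.sum_support_add_mul {α R : Type*} [Semiring R] (μ ν : α →₀ R) (g : α → R) :
    ∑ p ∈ (μ + ν).support, (μ + ν) p * g p
      = ∑ p ∈ μ.support, μ p * g p + ∑ p ∈ ν.support, ν p * g p :=
  Finsupp.sum_add_index' (h := fun p a => a * g p) (fun _ => zero_mul _)
    fun _ _ _ => add_mul _ _ _

theorem sum_mul_mul_setIntegral_nonneg {X ι : Type*} [Fintype ι] [MeasurableSpace X]
    {μ : Measure X} {s : Set X} (hs : MeasurableSet s) {K : ι → ι → X → ℝ}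
    (hK : ∀ i j, IntegrableOn (K i j) s μ) (c : ι → ℝ)
    (hKs : ∀ x ∈ s, 0 ≤ ∑ i, ∑ j, c i * c j * K i j x) :
    0 ≤ ∑ i, ∑ j, c i * c j * ∫ x in s, K i j x ∂μ := by
  have hcK : ∀ i j, IntegrableOn (fun x => c i * c j * K i j x) s μ := fun i j =>
    (hK i j).const_mul _
  calc 0 ≤ ∫ x in s, ∑ i, ∑ j, c i * c j * K i j x ∂μ := setIntegral_nonneg hs hKs
    _ = _ := by
      rw [integral_finsetSum _ fun i _ => integrable_finsetSum _ fun j _ => hcK i j]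
      simp_rw [integral_finsetSum _ fun j _ => hcK _ j, integral_const_mul]

section Variance

variable {n : ℕ}

theorem meanVec_add (μ ν : (Fin n → ℝ) →₀ ℝ) : meanVec (μ + ν) = meanVec μ + meanVec ν :=
  funext fun i => Finsupp.sum_support_add_mul μ ν fun p => p i

theorem varMat_add (μ ν : (Fin n → ℝ) →₀ ℝ) :
    varMat (μ + ν) = varMat μ + varMat ν
      - (vecMulVec (meanVec μ) (meanVec ν) + vecMulVec (meanVec ν) (meanVec μ)) := by
  ext i j
  have hmoment : ∑ p ∈ (μ + ν).support, (μ + ν) p * p i * p j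
      = ∑ p ∈ μ.support, μ p * p i * p j + ∑ p ∈ ν.support, ν p * p i * p j := by
    simpa only [mul_assoc] using Finsupp.sum_support_add_mul μ ν fun p => p i * p j
  simp only [varMat, meanVec_add, of_apply, hmoment, Matrix.add_apply, Matrix.sub_apply,
    vecMulVec_apply, Pi.add_apply]
  ring

theorem trace_varMat_add_mul {S : Matrix (Fin n) (Fin n) ℝ} (hS : S.IsSymm)
    (μ ν : (Fin n → ℝ) →₀ ℝ) :
    (varMat (μ + ν) * S).trace
      = (varMat μ * S).trace + (varMat ν * S).trace - 2 * (meanVec μ ⬝ᵥ S *ᵥ meanVec ν) := by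
  rw [varMat_add, sub_mul, add_mul, add_mul, trace_sub, trace_add, trace_add,
    trace_vecMulVec_mul, trace_vecMulVec_mul, hS.dotProduct_mulVec_comm (meanVec ν)]
  ring

theorem posSemidef_exp_neg_trace_varMat_add_mul {ι : Type*} [Fintype ι]
    {S : Matrix (Fin n) (Fin n) ℝ} (hS : S.PosSemidef) (μ : ι → (Fin n → ℝ) →₀ ℝ) :
    (of fun i j => Real.exp (-(varMat (μ i + μ j) * S).trace)).PosSemidef := by
  classical
  have hSymm : S.IsSymm := by simpa [IsHermitian, IsSymm] using hS.isHermitian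
  set M : Matrix (Fin n) ι ℝ := of fun a i => meanVec (μ i) a
  set d : ι → ℝ := fun i => Real.exp (-(varMat (μ i) * S).trace)
  have hMSM : ∀ i j, (Mᵀ * S * M) i j = meanVec (μ i) ⬝ᵥ S *ᵥ meanVec (μ j) := fun i j => by
    simp only [mul_apply, mulVec, dotProduct, transpose_apply, of_apply, M, Finset.sum_mul,
      Finset.mul_sum, mul_assoc]
    exact Finset.sum_comm
  have hGram := (hS.smul (zero_le_two (α := ℝ))).conjTranspose_mul_mul_same M
  convert hGram.map_exp.conjTranspose_mul_mul_same (diagonal d) using 1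
  ext i j
  simp only [of_apply, trace_varMat_add_mul hSymm, conjTranspose_eq_transpose_of_trivial,
    diagonal_transpose, Matrix.mul_smul, smul_mul, mul_diagonal, diagonal_mul, map_apply,
    Matrix.smul_apply, hMSM, smul_eq_mul, d]
  rw [← Real.exp_add, ← Real.exp_add]
  congr 1
  ring

end Variance

instance {n : ℕ} : BorelSpace (Matrix (Fin n) (Fin n) ℝ) :=
  inferInstanceAs (BorelSpace (Fin n → Fin n → ℝ))

theorem laplace_transform_ssppd_general {n k : ℕ} (f : Matrix (Fin n) (Fin n) ℝ → ℝ)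
    (hf_nonneg : ∀ S, S.PosDef → 0 ≤ f S)
    (μ : Fin k → ((Fin n → ℝ) →₀ ℝ))
    (hint : ∀ i j, IntegrableOn
      (fun S => Real.exp (-((varMat (μ i + μ j)) * S).trace) * f S)
      {S : Matrix (Fin n) (Fin n) ℝ | S.PosDef})
    (c : Fin k → ℝ) :
    0 ≤ ∑ i, ∑ j, c i * c j * laplaceT f (varMat (μ i + μ j)) := by
  refine sum_mul_mul_setIntegral_nonneg measurableSet_setOf_posDef hint c fun S hS => ?_
  have hkernel := (posSemidef_exp_neg_trace_varMat_add_mul hS.posSemidef μ).sum_mul_mul_nonneg c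
  calc 0 ≤ (∑ i, ∑ j, c i * c j * Real.exp (-(varMat (μ i + μ j) * S).trace)) * f S :=
        mul_nonneg hkernel (hf_nonneg S hS)
    _ = _ := by simp only [Finset.sum_mul, mul_assoc]

/-- μ ↦ Lf(Σ(μ)) is a positive definite semigroup function. -/
theorem laplace_transform_ssppd {n k : ℕ} (f : Matrix (Fin n) (Fin n) ℝ → ℝ)
    (hf_meas : Measurable f) (hf_nonneg : ∀ S, S.PosDef → 0 ≤ f S)
    (μ : Fin k → ((Fin n → ℝ) →₀ ℝ))
    (hpos : ∀ i p, 0 ≤ μ i p) (hprob : ∀ i, ∑ p ∈ (μ i).support, μ i p = 1)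
    (hint : ∀ i j, IntegrableOn
      (fun S => Real.exp (-((varMat (μ i + μ j)) * S).trace) * f S)
      {S : Matrix (Fin n) (Fin n) ℝ | S.PosDef})
    (c : Fin k → ℝ) :
    0 ≤ ∑ i, ∑ j, c i * c j * laplaceT f (varMat (μ i + μ j)) :=
  laplace_transform_ssppd_general f hf_nonneg μ hint c
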